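/- Suppose Z is a subset of the ordinal ω·β (β a nonzero countable ordinal) and {A_ν}_{ν<β} is a family of pairwise disjoint subsets of ω·β such that Z ∩ A_{γ_m} has order type ω for every m, where {γ_m : m < ω} enumerates β with every element repeated infinitely often, and the A_ν are positioned so that A_ν ⊆ [ω·ν, ω·(ν+1)). Then Z has order type ω·β. -/
import Mathlib


open Ordinal Set

noncomputable def otype (A : Set Ordinal) : Ordinal.{1} :=
  Ordinal.type ((· < ·) : A → A → Prop)

def MonoColor (f : Finset Ordinal → Fin 2) (S : Set Ordinal) (c : Fin 2) : Prop :=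
  ∀ x ∈ S, ∀ y ∈ S, x ≠ y → f {x, y} = c

def PartRel (α β γ : Ordinal.{0}) : Prop :=
  ∀ f : Finset Ordinal → Fin 2,
    (∃ B ⊆ Set.Iio α, otype B = Ordinal.lift.{1} β ∧ MonoColor f B 0) ∨
    (∃ C ⊆ Set.Iio α, otype C = Ordinal.lift.{1} γ ∧ MonoColor f C 1)

def Indecomp (α : Ordinal) : Prop := ∀ β < α, ∀ γ < α, β + γ < α

lemma otype_Iio (a : Ordinal) : otype (Set.Iio a) = Ordinal.lift.{1} a := by
  rw [← typein_ordinal a]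
  rfl

lemma otype_mono {S T : Set Ordinal} (h : S ⊆ T) : otype S ≤ otype T := by
  apply Ordinal.type_le_iff'.mpr
  exact ⟨⟨⟨Set.inclusion h, Set.inclusion_injective h⟩, Iff.rfl⟩⟩

lemma exists_strictMono_of_otype_omega {S : Set Ordinal}
    (h : otype S = Ordinal.omega0) :
    ∃ e : ℕ → Ordinal, StrictMono e ∧ ∀ n, e n ∈ S := by
  rw [otype, show (Ordinal.omega0 : Ordinal.{1}) =
      Ordinal.type (ULift.down.{1} ⁻¹'o ((·<·) : ℕ → ℕ → Prop)) from rfl] at h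
  obtain ⟨f⟩ := Ordinal.type_eq.mp h
  refine ⟨fun n => (f.symm ⟨n⟩ : Ordinal), ?_, fun n => (f.symm ⟨n⟩).2⟩
  intro m n hmn
  exact f.symm.map_rel_iff.mpr (show (ULift.down.{1} ⁻¹'o ((·<·) : ℕ → ℕ → Prop)) ⟨m⟩ ⟨n⟩ from hmn)

theorem stmt18 (β : Ordinal) (hβ0 : 0 < β) (hβ : β < (Cardinal.aleph 1).ord)
    (Z : Set Ordinal) (hZ : Z ⊆ Set.Iio (Ordinal.omega0 * β))
    (A : Ordinal → Set Ordinal)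
    (hAsub : ∀ ν < β, A ν ⊆ Set.Ico (Ordinal.omega0 * ν) (Ordinal.omega0 * (ν + 1)))
    (hdisj : ∀ ν < β, ∀ μ < β, ν ≠ μ → Disjoint (A ν) (A μ))
    (γ : ℕ → Ordinal) (hγ : ∀ m, γ m < β)
    (henum : ∀ ν < β, {m : ℕ | γ m = ν}.Infinite)
    (hω : ∀ m : ℕ, otype (Z ∩ A (γ m)) = Ordinal.omega0) :
    otype Z = Ordinal.lift.{1} (Ordinal.omega0 * β) := by
  have hων : ∀ ν < β, otype (Z ∩ A ν) = Ordinal.omega0 := by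
    intro ν hν
    obtain ⟨m, hm⟩ := (henum ν hν).nonempty
    rw [← hm]; exact hω m
  have hech : ∀ ν, ∃ e : ℕ → Ordinal, ν < β → (StrictMono e ∧ ∀ n, e n ∈ Z ∩ A ν) := by
    intro ν
    by_cases hν : ν < β
    · obtain ⟨e, he1, he2⟩ := exists_strictMono_of_otype_omega (hων ν hν)
      exact ⟨e, fun _ => ⟨he1, he2⟩⟩
    · exact ⟨fun _ => 0, fun h => absurd h hν⟩
  choose e he using hech
  have hub : otype Z ≤ Ordinal.lift.{1} (Ordinal.omega0 * β) := by
    rw [← otype_Iio]; exact otype_mono hZ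
  refine le_antisymm hub ?_
  rw [← otype_Iio]
  apply Ordinal.type_le_iff'.mpr
  have hdiv : ∀ x : Set.Iio (Ordinal.omega0 * β), x.1 / Ordinal.omega0 < β :=
    fun x => (Ordinal.div_lt Ordinal.omega0_ne_zero).mpr x.2
  have hnex : ∀ x : Ordinal, ∃ n : ℕ, x % Ordinal.omega0 = n :=
    fun x => Ordinal.lt_omega0.mp (Ordinal.mod_lt x Ordinal.omega0_ne_zero)
  choose nn hnn using hnex
  set F : Set.Iio (Ordinal.omega0 * β) → Z :=
    fun x => ⟨e (x.1 / Ordinal.omega0) (nn x.1), ((he _ (hdiv x)).2 _).1⟩ with hF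
  have hmono : ∀ x y : Set.Iio (Ordinal.omega0 * β), x.1 < y.1 → (F x).1 < (F y).1 := by
    intro x y hxy
    set a := x.1 / Ordinal.omega0 with ha
    set b := y.1 / Ordinal.omega0 with hb
    have hab : a ≤ b := by
      by_contra h
      push_neg at h
      have h1 : Ordinal.omega0 * (b + 1) ≤ Ordinal.omega0 * a :=
        mul_le_mul_right (by rwa [Ordinal.add_one_eq_succ, Order.succ_le_iff]) _
      have h2 : Ordinal.omega0 * a ≤ x.1 := Ordinal.mul_div_le x.1 _
      have h3 : y.1 < Ordinal.omega0 * (b + 1) := by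
        rw [mul_add_one, hb]
        exact Ordinal.lt_mul_div_add y.1 Ordinal.omega0_ne_zero
      exact absurd h3 (not_lt.mpr (h1.trans (h2.trans hxy.le)))
    rcases lt_or_eq_of_le hab with h | h
    · have h1 : (F x).1 < Ordinal.omega0 * (a + 1) :=
        (hAsub a (hdiv x) ((he _ (hdiv x)).2 _).2).2
      have h2 : Ordinal.omega0 * b ≤ (F y).1 :=
        (hAsub b (hdiv y) ((he _ (hdiv y)).2 _).2).1
      calc (F x).1 < Ordinal.omega0 * (a + 1) := h1
        _ ≤ Ordinal.omega0 * b := mul_le_mul_right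
            (by rwa [Ordinal.add_one_eq_succ, Order.succ_le_iff]) _
        _ ≤ (F y).1 := h2
    · have hm : x.1 % Ordinal.omega0 < y.1 % Ordinal.omega0 := by
        have hx := Ordinal.div_add_mod x.1 Ordinal.omega0
        have hy := Ordinal.div_add_mod y.1 Ordinal.omega0
        apply (add_lt_add_iff_left (Ordinal.omega0 * a)).mp
        calc Ordinal.omega0 * a + x.1 % Ordinal.omega0 = x.1 := by rw [ha]; exact hx
          _ < y.1 := hxy
          _ = Ordinal.omega0 * a + y.1 % Ordinal.omega0 := by rw [h, hb]; exact hy.symm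
      rw [hnn x.1, hnn y.1, Nat.cast_lt] at hm
      have hsm := ((he a (hdiv x)).1) hm
      show e a (nn x.1) < e b (nn y.1)
      rw [← h]
      exact hsm
  have hsmF : StrictMono F := fun x y hxy => hmono x y hxy
  exact ⟨(OrderEmbedding.ofStrictMono F hsmF).ltEmbedding⟩
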